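/- If a real number C satisfies γ(a, |C/b|^{1/a}) = Sgn(C)·((k₂ − k₁)/(k₁ + k₂))·Γ(a), then C is a global minimizer of the expected loss: for every real c, ∫ L(z + C)·f(z) dz ≤ ∫ L(z + c)·f(z) dz. -/

import Mathlib

open Real MeasureTheory Filter

/-- The asymmetric loss function. -/
noncomputable def asymLoss (k₁ k₂ z : ℝ) : ℝ := if 0 ≤ z then k₁ * z else -k₂ * z

/-- The generalized Gaussian density with mean zero. -/
noncomputable def genGauss (a b z : ℝ) : ℝ :=
  (2 * a * b * Real.Gamma a)⁻¹ * Real.exp (-(|z / b| ^ (1 / a)))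

/-- The lower incomplete gamma function. -/
noncomputable def lowerGamma (p x : ℝ) : ℝ := ∫ t in (0:ℝ)..x, t ^ (p - 1) * Real.exp (-t)

/-- The upper incomplete gamma function. -/
noncomputable def upperGamma (p x : ℝ) : ℝ := ∫ t in Set.Ioi x, t ^ (p - 1) * Real.exp (-t)

/-- The sign function used in the paper: `1` for `c ≥ 0`, `-1` for `c < 0`. -/
noncomputable def Sgn (c : ℝ) : ℝ := if 0 ≤ c then 1 else -1

/-!
The loss `L` is convex with subgradient `g w = k₁` for `w ≥ 0` and `g w = -k₂` for `w < 0`, so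
`L (z + c) ≥ L (z + C) + g (z + C) * (c - C)`; integrating against the density `f` gives
`E L(Z + c) ≥ E L(Z + C) + (c - C) * E g(Z + C)`, and `E g(Z + C) = k₁ - (k₁ + k₂) * P(Z < -C)`
vanishes when `-C` is a `k₁ / (k₁ + k₂)`-quantile of `Z`. For the generalized Gaussian the
substitution `z = b * t ^ a` turns tails into incomplete Γ-integrals:
`P(Z < -C) = 1/2 - Sgn C * γ(a, |C / b| ^ (1 / a)) / (2 * Γ(a))`, which the hypothesis on `C` makes
equal to `k₁ / (k₁ + k₂)`.
-/
open Set

section IncompleteGamma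

variable {p : ℝ}

lemma upperGamma_zero (hp : 0 < p) : upperGamma p 0 = Gamma p := by
  rw [Gamma_eq_integral hp, upperGamma]
  exact setIntegral_congr_fun measurableSet_Ioi fun t _ => mul_comm _ _

lemma lowerGamma_add_upperGamma (hp : 0 < p) {x : ℝ} (hx : 0 ≤ x) :
    lowerGamma p x + upperGamma p x = Gamma p := by
  have hi : IntegrableOn (fun t : ℝ => t ^ (p - 1) * exp (-t)) (Ioi 0) :=
    (GammaIntegral_convergent hp).congr_fun (fun t _ => mul_comm _ _) measurableSet_Ioi
  rw [← upperGamma_zero hp, lowerGamma, upperGamma, upperGamma,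
    intervalIntegral.integral_of_le hx,
    ← setIntegral_union (Ioc_disjoint_Ioi le_rfl) measurableSet_Ioi
      (hi.mono_set Ioc_subset_Ioi_self) (hi.mono_set (Ioi_subset_Ioi hx)),
    Ioc_union_Ioi_eq_Ioi hx]

lemma integral_Ioi_exp_neg_rpow_one_div (hp : 0 < p) {c : ℝ} (hc : 0 ≤ c) :
    ∫ u in Ioi c, exp (-u ^ (1 / p)) = p * upperGamma p (c ^ (1 / p)) := by
  rw [← integral_comp_rpow_Ioi_of_pos' hp hc, upperGamma, one_div, ← integral_const_mul]
  have hc' : 0 ≤ c ^ p⁻¹ := by positivity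
  refine setIntegral_congr_fun measurableSet_Ioi fun t ht => ?_
  rw [smul_eq_mul, rpow_rpow_inv (hc'.trans ht.le) hp.ne']
  ring

lemma integral_Ioi_exp_neg_div_rpow_one_div (hp : 0 < p) {b s : ℝ} (hb : 0 < b) (hs : 0 ≤ s) :
    ∫ z in Ioi s, exp (-(z / b) ^ (1 / p)) = p * b * upperGamma p ((s / b) ^ (1 / p)) := by
  have h := integral_comp_mul_left_Ioi (fun z => exp (-(z / b) ^ (1 / p))) (s / b) hb
  rw [mul_div_cancel₀ s hb.ne'] at h
  simp only [mul_div_cancel_left₀ _ hb.ne', smul_eq_mul] at h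
  rw [integral_Ioi_exp_neg_rpow_one_div hp (div_nonneg hs hb.le)] at h
  field_simp at h ⊢
  linarith

end IncompleteGamma

lemma integrable_comp_abs_of_integrableOn_Ioi {E : Type*} [NormedAddCommGroup E] {F : ℝ → E}
    (h : IntegrableOn F (Ioi 0)) : Integrable (fun x => F |x|) := by
  have hpos : IntegrableOn (fun x => F |x|) (Ioi 0) :=
    h.congr_fun (fun x hx => by rw [abs_of_pos hx]) measurableSet_Ioi
  have hneg : IntegrableOn (fun x => F |x|) (Iic 0) := by
    have hemb : MeasurableEmbedding fun x : ℝ => -x := (Homeomorph.neg ℝ).measurableEmbedding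
    rw [← Measure.map_neg_eq_self (volume : Measure ℝ), hemb.integrableOn_map_iff]
    simp_rw [Function.comp_def, abs_neg, neg_preimage, neg_Iic, neg_zero]
    exact (integrableOn_Ici_iff_integrableOn_Ioi enorm_ne_top).mpr hpos
  rw [← integrableOn_univ, ← Iic_union_Ioi (a := (0 : ℝ))]
  exact hneg.union hpos

section GenGauss

variable {a b : ℝ}

lemma genGauss_nonneg (ha : 0 < a) (hb : 0 < b) (z : ℝ) : 0 ≤ genGauss a b z := by
  have hΓ := Gamma_pos_of_pos ha
  unfold genGauss
  positivity

lemma genGauss_neg (z : ℝ) : genGauss a b (-z) = genGauss a b z := by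
  rw [genGauss, genGauss, neg_div, abs_neg]

lemma genGauss_abs (z : ℝ) : genGauss a b |z| = genGauss a b z := by
  rcases abs_choice z with h | h <;> rw [h]
  exact genGauss_neg z

lemma genGauss_of_nonneg (hb : 0 < b) {z : ℝ} (hz : 0 ≤ z) :
    genGauss a b z = (2 * a * b * Gamma a)⁻¹ * exp (-(z / b) ^ (1 / a)) := by
  rw [genGauss, abs_of_nonneg (div_nonneg hz hb.le)]

lemma integrable_abs_rpow_mul_genGauss (ha : 0 < a) (hb : 0 < b) {q : ℝ} (hq : -1 < q) :
    Integrable (fun z => |z| ^ q * genGauss a b z) := by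
  have hstd : IntegrableOn (fun u : ℝ => u ^ q * exp (-u ^ (1 / a))) (Ioi (b⁻¹ * 0)) := by
    rw [mul_zero]
    exact integrableOn_rpow_mul_exp_neg_rpow hq (by positivity)
  have hscaled := ((integrableOn_Ioi_comp_mul_left_iff _ 0 (inv_pos.mpr hb)).mpr hstd).const_mul
    (b ^ q * (2 * a * b * Gamma a)⁻¹)
  have hF : IntegrableOn (fun y => y ^ q * genGauss a b y) (Ioi 0) := by
    refine IntegrableOn.congr_fun hscaled (fun y hy => ?_) measurableSet_Ioi
    have hy : 0 < y := hy
    have hbq : 0 < b ^ q := by positivity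
    rw [genGauss_of_nonneg hb hy.le, inv_mul_eq_div, div_rpow hy.le hb.le]
    field_simp
  simpa only [genGauss_abs] using integrable_comp_abs_of_integrableOn_Ioi hF

lemma integrable_genGauss (ha : 0 < a) (hb : 0 < b) : Integrable (genGauss a b) := by
  simpa using integrable_abs_rpow_mul_genGauss ha hb neg_one_lt_zero

lemma integral_Ioi_genGauss (ha : 0 < a) (hb : 0 < b) {s : ℝ} (hs : 0 ≤ s) :
    ∫ z in Ioi s, genGauss a b z = upperGamma a ((s / b) ^ (1 / a)) / (2 * Gamma a) := by
  have hΓ := Gamma_pos_of_pos ha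
  rw [setIntegral_congr_fun measurableSet_Ioi fun z hz => genGauss_of_nonneg hb (hs.trans hz.le),
    integral_const_mul, integral_Ioi_exp_neg_div_rpow_one_div ha hb hs]
  field_simp

lemma integral_genGauss (ha : 0 < a) (hb : 0 < b) : ∫ z, genGauss a b z = 1 := by
  have hΓ := Gamma_pos_of_pos ha
  rw [← integral_congr_ae (.of_forall genGauss_abs), integral_comp_abs (f := genGauss a b),
    integral_Ioi_genGauss ha hb le_rfl, zero_div, zero_rpow (by positivity), upperGamma_zero ha]
  field_simp

lemma integral_Iio_neg_genGauss (s : ℝ) :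
    ∫ z in Iio (-s), genGauss a b z = ∫ z in Ioi s, genGauss a b z := by
  rw [setIntegral_congr_set Iio_ae_eq_Iic, ← integral_comp_neg_Ioi]
  simp only [genGauss_neg]

lemma integral_Iio_neg_genGauss_eq_lowerGamma (ha : 0 < a) (hb : 0 < b) (C : ℝ) :
    ∫ z in Iio (-C), genGauss a b z
      = 1 / 2 - Sgn C * lowerGamma a (|C / b| ^ (1 / a)) / (2 * Gamma a) := by
  have hΓ := Gamma_pos_of_pos ha
  have hsum := lowerGamma_add_upperGamma ha (x := |C / b| ^ (1 / a)) (by positivity)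
  rcases le_or_gt 0 C with hC | hC
  · rw [abs_of_nonneg (div_nonneg hC hb.le)] at hsum ⊢
    rw [integral_Iio_neg_genGauss, integral_Ioi_genGauss ha hb hC, Sgn, if_pos hC]
    field_simp
    linarith
  · rw [abs_of_neg (div_neg_of_neg_of_pos hC hb)] at hsum ⊢
    have hsplit := integral_add_compl (measurableSet_Iio (a := -C)) (integrable_genGauss ha hb)
    rw [compl_Iio, integral_Ici_eq_integral_Ioi, integral_genGauss ha hb,
      integral_Ioi_genGauss ha hb (by linarith), neg_div] at hsplit
    rw [Sgn, if_neg hC.not_ge]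
    field_simp at hsplit ⊢
    linarith

end GenGauss

section AsymLoss

variable {k₁ k₂ : ℝ}

/-- The subgradient of `asymLoss k₁ k₂` chosen at the kink `0`. -/
noncomputable def asymLossSlope (k₁ k₂ w : ℝ) : ℝ := if 0 ≤ w then k₁ else -k₂

lemma continuous_asymLoss : Continuous (asymLoss k₁ k₂) :=
  (continuous_const.mul continuous_id).if_le (continuous_const.mul continuous_id) continuous_const
    continuous_id fun w hw => by simp [← hw]

lemma abs_asymLoss_le (w : ℝ) : |asymLoss k₁ k₂ w| ≤ (|k₁| + |k₂|) * |w| := by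
  unfold asymLoss
  split_ifs <;> simp only [abs_mul, abs_neg] <;>
    nlinarith [abs_nonneg k₁, abs_nonneg k₂, abs_nonneg w]

lemma asymLoss_add_slope_mul_le (hk : 0 ≤ k₁ + k₂) (w d : ℝ) :
    asymLoss k₁ k₂ w + asymLossSlope k₁ k₂ w * d ≤ asymLoss k₁ k₂ (w + d) := by
  unfold asymLoss asymLossSlope
  split_ifs <;> nlinarith

lemma asymLossSlope_add_mul (f : ℝ → ℝ) (C z : ℝ) :
    asymLossSlope k₁ k₂ (z + C) * f z = k₁ * f z - (k₁ + k₂) * (Iio (-C)).indicator f z := by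
  by_cases h : 0 ≤ z + C
  · rw [asymLossSlope, if_pos h, indicator_of_notMem (by simp only [mem_Iio]; linarith)]
    ring
  · rw [asymLossSlope, if_neg h, indicator_of_mem (by simp only [mem_Iio]; linarith)]
    ring

variable {μ : Measure ℝ} {f : ℝ → ℝ}

lemma integrable_asymLoss_mul (hf : Integrable f μ) (hzf : Integrable (fun z => |z| * f z) μ)
    (c : ℝ) : Integrable (fun z => asymLoss k₁ k₂ (z + c) * f z) μ := by
  refine ((hzf.norm.add (hf.norm.const_mul |c|)).const_mul (|k₁| + |k₂|)).mono'
    (((continuous_asymLoss.comp (continuous_add_const c)).aestronglyMeasurable).mul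
      hf.aestronglyMeasurable) (.of_forall fun z => ?_)
  simp only [norm_mul, Real.norm_eq_abs, abs_abs]
  calc |asymLoss k₁ k₂ (z + c)| * |f z| ≤ (|k₁| + |k₂|) * (|z| + |c|) * |f z| := by
        gcongr
        exact (abs_asymLoss_le _).trans (by gcongr; exact abs_add_le z c)
    _ = (|k₁| + |k₂|) * (|z| * |f z| + |c| * |f z|) := by ring

theorem integral_asymLoss_mul_le_of_quantile (hk : 0 ≤ k₁ + k₂) (hf0 : ∀ z, 0 ≤ f z)
    (hf : Integrable f μ) (hzf : Integrable (fun z => |z| * f z) μ) {C : ℝ}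
    (hC : (k₁ + k₂) * ∫ z in Iio (-C), f z ∂μ = k₁ * ∫ z, f z ∂μ) (c : ℝ) :
    ∫ z, asymLoss k₁ k₂ (z + C) * f z ∂μ ≤ ∫ z, asymLoss k₁ k₂ (z + c) * f z ∂μ := by
  have hslope_int : Integrable (fun z => asymLossSlope k₁ k₂ (z + C) * f z) μ := by
    simp_rw [asymLossSlope_add_mul]
    exact (hf.const_mul k₁).sub ((hf.indicator measurableSet_Iio).const_mul (k₁ + k₂))
  have hslope : ∫ z, asymLossSlope k₁ k₂ (z + C) * f z ∂μ = 0 := by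
    simp_rw [asymLossSlope_add_mul]
    rw [integral_sub (hf.const_mul k₁) ((hf.indicator measurableSet_Iio).const_mul (k₁ + k₂)),
      integral_const_mul, integral_const_mul, integral_indicator measurableSet_Iio, hC, sub_self]
  have hpoint : ∀ z, asymLoss k₁ k₂ (z + C) * f z + asymLossSlope k₁ k₂ (z + C) * f z * (c - C)
      ≤ asymLoss k₁ k₂ (z + c) * f z := fun z => by
    have h := mul_le_mul_of_nonneg_right (asymLoss_add_slope_mul_le hk (z + C) (c - C)) (hf0 z)
    rw [add_add_sub_cancel] at h
    linarith
  calc ∫ z, asymLoss k₁ k₂ (z + C) * f z ∂μ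
      = ∫ z, asymLoss k₁ k₂ (z + C) * f z ∂μ
          + (∫ z, asymLossSlope k₁ k₂ (z + C) * f z ∂μ) * (c - C) := by
        rw [hslope, zero_mul, add_zero]
    _ = ∫ z, (asymLoss k₁ k₂ (z + C) * f z + asymLossSlope k₁ k₂ (z + C) * f z * (c - C)) ∂μ := by
        rw [integral_add (integrable_asymLoss_mul hf hzf C) (hslope_int.mul_const (c - C)),
          integral_mul_const]
    _ ≤ ∫ z, asymLoss k₁ k₂ (z + c) * f z ∂μ :=
        integral_mono ((integrable_asymLoss_mul hf hzf C).add (hslope_int.mul_const (c - C)))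
          (integrable_asymLoss_mul hf hzf c) hpoint

end AsymLoss

lemma Sgn_mul_self (c : ℝ) : Sgn c * Sgn c = 1 := by
  unfold Sgn
  split_ifs <;> norm_num

theorem minimizer_expected_loss (a b k₁ k₂ : ℝ) (ha : 0 < a) (hb : 0 < b)
    (hk₁ : 0 < k₁) (hk₂ : 0 < k₂) (C : ℝ)
    (hC : lowerGamma a (|C / b| ^ (1 / a)) = Sgn C * ((k₂ - k₁) / (k₁ + k₂)) * Real.Gamma a) :
    ∀ c : ℝ, (∫ z, asymLoss k₁ k₂ (z + C) * genGauss a b z)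
      ≤ ∫ z, asymLoss k₁ k₂ (z + c) * genGauss a b z := by
  have hΓ := Gamma_pos_of_pos ha
  refine integral_asymLoss_mul_le_of_quantile (by positivity) (genGauss_nonneg ha hb)
    (integrable_genGauss ha hb) ?_ ?_
  · simpa using integrable_abs_rpow_mul_genGauss ha hb (q := 1) (by norm_num)
  · rw [integral_genGauss ha hb, integral_Iio_neg_genGauss_eq_lowerGamma ha hb C, hC]
    field_simp
    linear_combination (k₁ - k₂) * Sgn_mul_self C
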